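/- arXiv:1305.5585 — 2 statements merged into one kernel-verified Lean document; each statement's English description precedes it below -/
import Mathlib

section
/- Let (x*, y*, z*) be an optimal solution of the relaxed association problem with Lagrange multipliers λⱼ for the normal-RB constraints, satisfying the stationarity condition c⁽ⁿ⁾_{ij}/Rᵢ = λⱼ whenever x*_{ij} > 0. If users i and m both have x*_{ij} > 0, x*_{in} > 0, x*_{mj} > 0, x*_{mn} > 0 for two distinct BSs j ≠ n, then c⁽ⁿ⁾_{ij} · c⁽ⁿ⁾_{mn} = c⁽ⁿ⁾_{in} · c⁽ⁿ⁾_{mj}. -/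
theorem mul_mul_eq_of_rank_one {α : Type*} [CommSemigroup α] {a b c d u₁ u₂ v₁ v₂ : α}
    (ha : a = v₁ * u₁) (hb : b = v₂ * u₁) (hc : c = v₁ * u₂) (hd : d = v₂ * u₂) :
    a * d = b * c := by
  subst ha hb hc hd
  ac_rfl

theorem kkt_cycle_condition_general (NU NB : ℕ)
    (cn : Fin NU → Fin NB → ℝ)
    (x : Fin NU → Fin NB → ℝ)
    (R : Fin NU → ℝ) (hR : ∀ i, 0 < R i)
    (lam : Fin NB → ℝ)
    (hstat : ∀ i j, 0 < x i j → cn i j / R i = lam j)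
    (i m : Fin NU)
    (j n : Fin NB)
    (hij : 0 < x i j) (hin : 0 < x i n) (hmj : 0 < x m j) (hmn : 0 < x m n) :
    cn i j * cn m n = cn i n * cn m j := by
  have hcn : ∀ i j, 0 < x i j → cn i j = lam j * R i := fun i j hx =>
    (div_eq_iff (hR i).ne').mp (hstat i j hx)
  exact mul_mul_eq_of_rank_one (hcn i j hij) (hcn i n hin) (hcn m j hmj) (hcn m n hmn)

/-- KKT cycle condition: if the stationarity condition `c⁽ⁿ⁾ᵢⱼ / Rᵢ = λⱼ` holds
whenever `x*ᵢⱼ > 0`, and users `i ≠ m` are both served by two distinct BSs `j ≠ n`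
in normal RBs, then `c⁽ⁿ⁾ᵢⱼ · c⁽ⁿ⁾ₘₙ = c⁽ⁿ⁾ᵢₙ · c⁽ⁿ⁾ₘⱼ`. -/
theorem kkt_cycle_condition (NU NB : ℕ)
    (cn : Fin NU → Fin NB → ℝ)
    (x : Fin NU → Fin NB → ℝ)
    (R : Fin NU → ℝ) (hR : ∀ i, 0 < R i)
    (lam : Fin NB → ℝ) (hlam : ∀ j, 0 < lam j)
    (hstat : ∀ i j, 0 < x i j → cn i j / R i = lam j)
    (i m : Fin NU) (him : i ≠ m)
    (j n : Fin NB) (hjn : j ≠ n)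
    (hij : 0 < x i j) (hin : 0 < x i n) (hmj : 0 < x m j) (hmn : 0 < x m n) :
    cn i j * cn m n = cn i n * cn m j :=
  kkt_cycle_condition_general NU NB cn x R hR lam hstat i m j n hij hin hmj hmn
end

section
/- Let G be a graph on user-vertices where each edge is colored by a BS index, such that (a) any two vertices share at most one edge, and (b) every monochromatic edge set forms a clique, and (c) there is no cycle using edges of more than one color. Then the number of vertices incident to edges of at least two different colors is at most N_B − 1, where N_B is the number of colors actually used. -/
/-!
Think of the used colours and the vertices as the two sides of an incidence graph; the two
hypotheses say that this graph is a forest. Hence an infinite walk that alternates vertices and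
colours, never immediately repeating either, is impossible: its first repeated vertex closes a
multicoloured cycle, or, after two steps, gives two vertices two common colours. Such a walk could
be continued forever if every used colour contained two fractional vertices, so some used colour
`j` contains at most one. Erasing `j` loses one used colour and at most one fractional vertex and
preserves both hypotheses, so the bound follows by induction on the number of used colours.
-/

namespace ColorIncidence

variable {V ι : Type*} (serves : ι → V → Prop)

def usedColors : Set ι := {j | ∃ u v, u ≠ v ∧ serves j u ∧ serves j v}

def fractionalVertices : Set V :=
  {v | ∃ j k : ι, ∃ u w : V, j ≠ k ∧ u ≠ v ∧ w ≠ v ∧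
    serves j v ∧ serves j u ∧ serves k v ∧ serves k w}

def AtMostOneCommonColor : Prop :=
  ∀ u v : V, u ≠ v → ∀ j k : ι, serves j u → serves j v → serves k u → serves k v → j = k

def HasMulticolorCycle : Prop :=
  ∃ (n : ℕ) (hn : 3 ≤ n) (v : Fin n → V) (col : Fin n → ι),
    Function.Injective v ∧
    (∀ k : Fin n, serves (col k) (v k) ∧
      serves (col k) (v (k + ⟨1, Nat.lt_of_lt_of_le (by decide) hn⟩))) ∧
    ¬ ∀ k k' : Fin n, col k = col k'

def eraseColor (j : ι) : ι → V → Prop := fun k x => serves k x ∧ k ≠ j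

structure IsAlternatingWalk (v : ℕ → V) (c : ℕ → ι) : Prop where
  vertex_ne : ∀ n, v (n + 1) ≠ v n
  color_ne : ∀ n, c (n + 1) ≠ c n
  serves_left : ∀ n, serves (c n) (v n)
  serves_right : ∀ n, serves (c n) (v (n + 1))

variable {serves}

theorem AtMostOneCommonColor.mono {serves' : ι → V → Prop} (h : AtMostOneCommonColor serves)
    (hle : serves' ≤ serves) : AtMostOneCommonColor serves' :=
  fun u v huv j k hju hjv hku hkv =>
    h u v huv j k (hle j u hju) (hle j v hjv) (hle k u hku) (hle k v hkv)

theorem HasMulticolorCycle.mono {serves' : ι → V → Prop} (h : HasMulticolorCycle serves')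
    (hle : serves' ≤ serves) : HasMulticolorCycle serves := by
  obtain ⟨n, hn, v, col, hinj, hedge, hcol⟩ := h
  exact ⟨n, hn, v, col, hinj,
    fun k => ⟨hle _ _ (hedge k).1, hle _ _ (hedge k).2⟩, hcol⟩

theorem eraseColor_le (j : ι) : eraseColor serves j ≤ serves :=
  fun _ _ h => h.1

theorem usedColors_eraseColor (j : ι) :
    usedColors (eraseColor serves j) = usedColors serves \ {j} := by
  ext k
  constructor
  · rintro ⟨u, v, huv, ⟨hu, hk⟩, hv, -⟩
    exact ⟨⟨u, v, huv, hu, hv⟩, hk⟩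
  · rintro ⟨⟨u, v, huv, hu, hv⟩, hk⟩
    exact ⟨u, v, huv, ⟨hu, hk⟩, hv, hk⟩

theorem fractionalVertices_subset_eraseColor_union (j : ι) :
    fractionalVertices serves ⊆
      fractionalVertices (eraseColor serves j) ∪
        {v | v ∈ fractionalVertices serves ∧ serves j v} := by
  intro x hx
  obtain ⟨p, q, y, z, hpq, hy, hz, hpx, hpy, hqx, hqz⟩ := id hx
  by_cases hpj : p = j
  · exact Or.inr ⟨hx, hpj ▸ hpx⟩
  by_cases hqj : q = j
  · exact Or.inr ⟨hx, hqj ▸ hqx⟩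
  exact Or.inl ⟨p, q, y, z, hpq, hy, hz, ⟨hpx, hpj⟩, ⟨hpy, hpj⟩, ⟨hqx, hqj⟩, ⟨hqz, hqj⟩⟩

theorem one_lt_ncard_usedColors [Finite ι] {v : V} (hv : v ∈ fractionalVertices serves) :
    1 < (usedColors serves).ncard := by
  obtain ⟨j, k, u, w, hjk, hu, hw, hjv, hju, hkv, hkw⟩ := hv
  exact (Set.one_lt_ncard_iff).2 ⟨j, k, ⟨u, v, hu, hju, hjv⟩, ⟨w, v, hw, hkw, hkv⟩, hjk⟩

namespace IsAlternatingWalk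

variable {v : ℕ → V} {c : ℕ → ι}

theorem shift (hw : IsAlternatingWalk serves v c) (i : ℕ) :
    IsAlternatingWalk serves (fun k => v (i + k)) (fun k => c (i + k)) where
  vertex_ne k := hw.vertex_ne (i + k)
  color_ne k := hw.color_ne (i + k)
  serves_left k := hw.serves_left (i + k)
  serves_right k := hw.serves_right (i + k)

theorem apply_two_ne_apply_zero (hone : AtMostOneCommonColor serves)
    (hw : IsAlternatingWalk serves v c) : v 2 ≠ v 0 := by
  intro h2
  have hc1 : serves (c 1) (v 0) := h2 ▸ hw.serves_right 1
  exact hw.color_ne 0 <| hone (v 0) (v 1) (hw.vertex_ne 0).symm (c 1) (c 0)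
    hc1 (hw.serves_left 1) (hw.serves_left 0) (hw.serves_right 0)

theorem hasMulticolorCycle (hw : IsAlternatingWalk serves v c) {n : ℕ} (hn : 3 ≤ n)
    (hinj : Set.InjOn v (Set.Iio n)) (hclosed : v n = v 0) : HasMulticolorCycle serves := by
  refine ⟨n, hn, fun k => v k, fun k => c k, fun a b hab => Fin.ext (hinj a.isLt b.isLt hab),
    fun k => ⟨hw.serves_left k, ?_⟩, fun h => hw.color_ne 0 (h ⟨1, by omega⟩ ⟨0, by omega⟩)⟩
  have hval : ((k + ⟨1, by omega⟩ : Fin n) : ℕ) = (k + 1) % n := Fin.val_add _ _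
  beta_reduce
  obtain hk | hk : (k : ℕ) + 1 < n ∨ (k : ℕ) + 1 = n := by omega
  · rw [hval, Nat.mod_eq_of_lt hk]
    exact hw.serves_right k
  · rw [hval, hk, Nat.mod_self, ← hclosed]
    simpa only [hk] using hw.serves_right k

end IsAlternatingWalk

theorem not_isAlternatingWalk [Finite V] (hone : AtMostOneCommonColor serves)
    (hcycle : ¬ HasMulticolorCycle serves) {v : ℕ → V} {c : ℕ → ι} :
    ¬ IsAlternatingWalk serves v c := by
  classical
  intro hw
  have hrep : ∃ m, ∃ i < m, v i = v m := by
    obtain ⟨a, b, hab, h⟩ := Finite.exists_ne_map_eq_of_infinite v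
    rcases hab.lt_or_gt with hab | hab
    · exact ⟨b, a, hab, h⟩
    · exact ⟨a, b, hab, h.symm⟩
  obtain ⟨i, hi, hvi⟩ := Nat.find_spec hrep
  set m := Nat.find hrep
  have hinj : Set.InjOn (fun k => v (i + k)) (Set.Iio (m - i)) := by
    intro a ha b hb hab
    simp only [Set.mem_Iio] at ha hb
    by_contra hne
    rcases Nat.lt_or_gt_of_ne hne with h | h
    · exact Nat.find_min hrep (m := i + b) (by omega) ⟨i + a, by omega, hab⟩
    · exact Nat.find_min hrep (m := i + a) (by omega) ⟨i + b, by omega, hab.symm⟩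
  have hclosed : v (i + (m - i)) = v (i + 0) := by rw [Nat.add_sub_cancel' hi.le, add_zero, hvi]
  obtain h | h | h : m - i = 1 ∨ m - i = 2 ∨ 3 ≤ m - i := by omega
  · rw [h] at hclosed
    exact (hw.shift i).vertex_ne 0 hclosed
  · rw [h] at hclosed
    exact (hw.shift i).apply_two_ne_apply_zero hone hclosed
  · exact hcycle ((hw.shift i).hasMulticolorCycle h hinj hclosed)

theorem exists_mem_usedColors_subsingleton [Finite V] (hone : AtMostOneCommonColor serves)
    (hcycle : ¬ HasMulticolorCycle serves) {v₀ : V} (hv₀ : v₀ ∈ fractionalVertices serves) :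
    ∃ j ∈ usedColors serves, {v | v ∈ fractionalVertices serves ∧ serves j v}.Subsingleton := by
  by_contra! hcon
  have step : ∀ p : fractionalVertices serves × ι, ∃ q : fractionalVertices serves × ι,
      (q.1 : V) ≠ p.1 ∧ q.2 ≠ p.2 ∧ serves q.2 p.1 ∧ serves q.2 q.1 := by
    rintro ⟨⟨v, a, b, u, w, hab, hu, hw, hav, hau, hbv, hbw⟩, j⟩
    obtain ⟨j', hj'j, hj'v, hj'⟩ : ∃ j' ≠ j, serves j' v ∧ j' ∈ usedColors serves := by
      by_cases haj : a = j
      · exact ⟨b, haj ▸ hab.symm, hbv, w, v, hw, hbw, hbv⟩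
      · exact ⟨a, haj, hav, u, v, hu, hau, hav⟩
    obtain ⟨v', ⟨hv'frac, hv'⟩, hv'v⟩ := (hcon j' hj').exists_ne v
    exact ⟨(⟨v', hv'frac⟩, j'), hv'v, hj'j, hj'v, hv'⟩
  choose next hne_v hne_c hserves_left hserves_right using step
  obtain ⟨j₀, -⟩ := id hv₀
  let p : ℕ → fractionalVertices serves × ι := fun n => next^[n] (⟨v₀, hv₀⟩, j₀)
  have hp : ∀ n, p (n + 1) = next (p n) := fun n => Function.iterate_succ_apply' next n _
  exact not_isAlternatingWalk hone hcycle
    (v := fun n => ((p n).1 : V)) (c := fun n => (p (n + 1)).2)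
    { vertex_ne := fun n => hp n ▸ hne_v (p n)
      color_ne := fun n => hp (n + 1) ▸ hne_c (p (n + 1))
      serves_left := fun n => hp n ▸ hserves_left (p n)
      serves_right := fun n => hp n ▸ hserves_right (p n) }

theorem ncard_fractionalVertices_le [Finite V] [Finite ι] (hone : AtMostOneCommonColor serves)
    (hcycle : ¬ HasMulticolorCycle serves) :
    (fractionalVertices serves).ncard ≤ (usedColors serves).ncard - 1 := by
  induction hC : (usedColors serves).ncard using Nat.strong_induction_on generalizing serves with
  | _ C ih =>
  rcases (fractionalVertices serves).eq_empty_or_nonempty with hF | ⟨v₀, hv₀⟩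
  · simp [hF]
  have hC2 := hC ▸ one_lt_ncard_usedColors hv₀
  obtain ⟨j, hj, hpendant⟩ := exists_mem_usedColors_subsingleton hone hcycle hv₀
  have hC' : (usedColors (eraseColor serves j)).ncard = C - 1 := by
    rw [usedColors_eraseColor, Set.ncard_sdiff_singleton_of_mem hj, hC]
  have hrest := ih (C - 1) (by omega) (hone.mono (eraseColor_le j))
    (fun h => hcycle (h.mono (eraseColor_le j))) hC'
  calc (fractionalVertices serves).ncard
      ≤ (fractionalVertices (eraseColor serves j)).ncard
          + {v | v ∈ fractionalVertices serves ∧ serves j v}.ncard :=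
        (Set.ncard_le_ncard (fractionalVertices_subset_eraseColor_union j)).trans
          (Set.ncard_union_le _ _)
    _ ≤ (C - 1 - 1) + 1 := add_le_add hrest (Set.ncard_le_one_iff_subsingleton.2 hpendant)
    _ = C - 1 := by omega

end ColorIncidence

open ColorIncidence in
/-- `serves j v` says that BS `j` serves user `v`: the edges of colour `j` join all pairs of
distinct users served by `j`, so condition (b) holds by construction. -/
theorem fractional_users_le_colors_sub_one {V : Type*} [Fintype V] (NB : ℕ)
    (serves : Fin NB → V → Prop)
    -- (a) any two distinct vertices share at most one edge (one common color):
    (hone : ∀ u v : V, u ≠ v → ∀ j k : Fin NB,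
      serves j u → serves j v → serves k u → serves k v → j = k)
    -- (c) no cycle uses edges of more than one color:
    (hnocycle : ¬ ∃ (n : ℕ) (hn : 3 ≤ n) (v : Fin n → V) (col : Fin n → Fin NB),
      Function.Injective v ∧
      (∀ k : Fin n, serves (col k) (v k) ∧ serves (col k) (v (k + ⟨1, by omega⟩))) ∧
      ¬ ∀ k k' : Fin n, col k = col k') :
    Nat.card {v : V // ∃ j k : Fin NB, ∃ u w : V, j ≠ k ∧ u ≠ v ∧ w ≠ v ∧
        serves j v ∧ serves j u ∧ serves k v ∧ serves k w} ≤
      Nat.card {j : Fin NB // ∃ u v : V, u ≠ v ∧ serves j u ∧ serves j v} - 1 := by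
  have h := ncard_fractionalVertices_le (serves := serves) hone hnocycle
  rwa [← Nat.card_coe_set_eq, ← Nat.card_coe_set_eq] at h
end
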